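/- arXiv:2202.12184 — 4 statements merged into one kernel-verified Lean document; each statement's English description precedes it below -/
import Mathlib

section
/- Suppose r* is a Δ-minimal repair of r with solution S, C is a ⊂-minimal set cover of the rules failed by r with C ⊊ S, and r' is the tuple agreeing with r* on C and with r outside C. If there exists a C-minimal repair (a repair differing from r only on C and of minimal cost among such), its cost is strictly greater than Δ(r, r'). Equivalently, Δ(r, r') is strictly smaller than the cost of any repair of r whose solution is contained in C. -/
/-- Δ(r,r') is strictly smaller than the cost of any repair of r
whose solution is contained in the ⊂-minimal cover C ⊊ S. -/
theorem stmt_3 {m : ℕ} {A : Fin m → Type*} {J : Type*} [Fintype J]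
    (δ : ∀ i, A i → A i → ℕ)
    (hpd : ∀ i (v w : A i), δ i v w = 0 ↔ v = w)
    (Rules : J → ∀ i, Set (A i)) (r rstar r' : ∀ i, A i)
    (S C : Set (Fin m))
    (hS : S = {i | r i ≠ rstar i})
    (hrep : ∀ j, ∃ i, rstar i ∉ Rules j i)
    (hmin : ∀ t : ∀ i, A i, (∀ j, ∃ i, t i ∉ Rules j i) →
      ∑ i, δ i (r i) (rstar i) ≤ ∑ i, δ i (r i) (t i))
    (hcover : ∀ j, (∀ i, r i ∈ Rules j i) → ∃ i ∈ C, Rules j i ≠ Set.univ)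
    (hminimalC : ∀ C' ⊂ C, ¬ (∀ j, (∀ i, r i ∈ Rules j i) → ∃ i ∈ C', Rules j i ≠ Set.univ))
    (hCS : C ⊂ S)
    (hr' : ∀ i, (i ∈ C → r' i = rstar i) ∧ (i ∉ C → r' i = r i)) :
    ∀ t : ∀ i, A i, (∀ j, ∃ i, t i ∉ Rules j i) → (∀ i, i ∉ C → t i = r i) →
      ∑ i, δ i (r i) (r' i) < ∑ i, δ i (r i) (t i) := by
  intro t ht _
  obtain ⟨hCsub, hne⟩ := hCS
  obtain ⟨i0, hi0S, hi0C⟩ := Set.not_subset.mp hne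
  have hlt : ∑ i, δ i (r i) (r' i) < ∑ i, δ i (r i) (rstar i) := by
    apply Finset.sum_lt_sum
    · intro i _
      by_cases hi : i ∈ C
      · rw [(hr' i).1 hi]
      · rw [(hr' i).2 hi, (hpd i (r i) (r i)).2 rfl]; exact Nat.zero_le _
    · refine ⟨i0, Finset.mem_univ _, ?_⟩
      rw [(hr' i0).2 hi0C, (hpd i0 (r i0) (r i0)).2 rfl]
      have hne' : r i0 ≠ rstar i0 := by rw [hS] at hi0S; exact hi0S
      exact Nat.pos_of_ne_zero fun h => hne' ((hpd i0 _ _).1 h)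
  exact lt_of_lt_of_le hlt (hmin t ht)
end

section
/- If r* is a Δ-minimal repair of r with solution S, C is a set cover of the rules failed by r with C ⊊ S, and r' agrees with r* on C and with r elsewhere, then r' is not a repair of r (i.e., r' fails at least one edit rule). -/
/-- the tuple r' agreeing with a Δ-minimal repair on a cover
C ⊊ S and with r elsewhere is not a repair: it fails at least one rule. -/
theorem stmt_4 {m : ℕ} {A : Fin m → Type*} {J : Type*} [Fintype J]
    (δ : ∀ i, A i → A i → ℕ)
    (hpd : ∀ i (v w : A i), δ i v w = 0 ↔ v = w)
    (Rules : J → ∀ i, Set (A i)) (r rstar r' : ∀ i, A i)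
    (S C : Set (Fin m))
    (hS : S = {i | r i ≠ rstar i})
    (hSne : S.Nonempty)
    (hrep : ∀ j, ∃ i, rstar i ∉ Rules j i)
    (hmin : ∀ t : ∀ i, A i, (∀ j, ∃ i, t i ∉ Rules j i) →
      ∑ i, δ i (r i) (rstar i) ≤ ∑ i, δ i (r i) (t i))
    (hcover : ∀ j, (∀ i, r i ∈ Rules j i) → ∃ i ∈ C, Rules j i ≠ Set.univ)
    (hCS : C ⊂ S)
    (hr' : ∀ i, (i ∈ C → r' i = rstar i) ∧ (i ∉ C → r' i = r i)) :
    ∃ j, ∀ i, r' i ∈ Rules j i := by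
  by_contra h
  push_neg at h
  have hle := hmin r' h
  have hlt : ∑ i, δ i (r i) (r' i) < ∑ i, δ i (r i) (rstar i) := by
    obtain ⟨i₀, hi₀S, hi₀C⟩ := Set.exists_of_ssubset hCS
    refine Finset.sum_lt_sum (fun i _ => ?_) ⟨i₀, Finset.mem_univ _, ?_⟩
    · 
      by_cases hi : i ∈ C
      · rw [(hr' i).1 hi]
      · rw [(hr' i).2 hi, (hpd i (r i) (r i)).mpr rfl]
        exact Nat.zero_le _
    · rw [(hr' i₀).2 hi₀C, (hpd i₀ (r i₀) (r i₀)).mpr rfl]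
      have : r i₀ ≠ rstar i₀ := by rw [hS] at hi₀S; exact hi₀S
      exact Nat.pos_of_ne_zero (fun h0 => this ((hpd _ _ _).mp h0))
  omega
end

section
/- If r* is a Δ-minimal repair of tuple r with solution S, and the edit rule set is its own sufficient set in the sense that every solution is a set cover of failing rules, then for every attribute a_i ∈ S we have r[a_i] ≠ r*[a_i] and there exists a rule E in the rule set with r*[a_i] ∉ E_i. In particular, no Δ-minimal repair changes an attribute to a value that lies in the i-th component of every rule. -/
/-- a Δ-minimal repair changes only attributes that are necessary:
for every i in the solution, r and r* differ at i and some rule has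
r*[i] outside its i-th component. -/
theorem stmt_5 {m : ℕ} {A : Fin m → Type*} {J : Type*} [Fintype J]
    (δ : ∀ i, A i → A i → ℕ)
    (hpd : ∀ i (v w : A i), δ i v w = 0 ↔ v = w)
    (Rules : J → ∀ i, Set (A i)) (r rstar : ∀ i, A i)
    (S : Set (Fin m))
    (hS : S = {i | r i ≠ rstar i})
    (hrep : ∀ j, ∃ i, rstar i ∉ Rules j i)
    (hsuf : ∀ t : ∀ i, A i, (∀ j, ∃ i, t i ∉ Rules j i) →
      ∀ j, (∀ i, r i ∈ Rules j i) → ∃ i, t i ≠ r i ∧ Rules j i ≠ Set.univ)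
    (hmin : ∀ t : ∀ i, A i, (∀ j, ∃ i, t i ∉ Rules j i) →
      ∑ i, δ i (r i) (rstar i) ≤ ∑ i, δ i (r i) (t i)) :
    ∀ i ∈ S, r i ≠ rstar i ∧ ∃ j, rstar i ∉ Rules j i := by
  intro i hi
  rw [hS] at hi
  refine ⟨hi, ?_⟩
  by_contra hno
  push_neg at hno
  -- define t = rstar except t i = r i
  set t : ∀ k, A k := fun k => if h : k = i then h ▸ r i else rstar k with ht
  have hti : t i = r i := by simp [ht]
  have htk : ∀ k, k ≠ i → t k = rstar k := by intro k hk; simp [ht, hk]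
  have htrep : ∀ j, ∃ k, t k ∉ Rules j k := by
    intro j
    obtain ⟨k, hk⟩ := hrep j
    have hki : k ≠ i := by rintro rfl; exact hk (hno j)
    exact ⟨k, by rw [htk k hki]; exact hk⟩
  have hle := hmin t htrep
  have hlt : ∑ k, δ k (r k) (t k) < ∑ k, δ k (r k) (rstar k) := by
    apply Finset.sum_lt_sum
    · intro k _
      by_cases hk : k = i
      · subst hk; rw [hti, (hpd k (r k) (r k)).2 rfl]; exact Nat.zero_le _
      · rw [htk k hk]
    · refine ⟨i, Finset.mem_univ i, ?_⟩
      rw [hti, (hpd i (r i) (r i)).2 rfl]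
      have : δ i (r i) (rstar i) ≠ 0 := fun h => hi ((hpd i _ _).1 h)
      omega
  omega
end

section
/- Let the edit rule set E partition into two independent sets E' over attributes R' and E'' over attributes R'' with R' ∩ R'' = ∅ and R' ∪ R'' equal to the full non-key attribute set. Then a tuple r* is a Δ-minimal repair of a group of tuples G (minimizing the summed cost Σ_{r ∈ G} Δ(r, r*) among tuples satisfying E) if and only if r*[R'] is a Δ-minimal repair of G restricted to R' against E' and r*[R''] is a Δ-minimal repair of G restricted to R'' against E''. -/
/-- for rules partitioning into independent sets over a partition
R1, R2 of the attributes, a tuple is a Δ-minimal repair of a group G iff each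
restriction is a Δ-minimal repair of the restricted group against the
corresponding rules. -/
theorem stmt_7 {m : ℕ} {A : Fin m → Type*} [∀ i, Nonempty (A i)]
    {J1 J2 : Type*} [Fintype J1] [Fintype J2]
    (δ : ∀ i, A i → A i → ℕ)
    (hpd : ∀ i (v w : A i), δ i v w = 0 ↔ v = w)
    (R1 R2 : Finset (Fin m)) (hdisj : Disjoint R1 R2)
    (hunion : R1 ∪ R2 = Finset.univ)
    (E1 : J1 → ∀ i, Set (A i)) (E2 : J2 → ∀ i, Set (A i))
    (hE1 : ∀ j i, i ∉ R1 → E1 j i = Set.univ)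
    (hE2 : ∀ j i, i ∉ R2 → E2 j i = Set.univ)
    (hsat1 : ∃ t : ∀ i, A i, ∀ j, ∃ i, t i ∉ E1 j i)
    (hsat2 : ∃ t : ∀ i, A i, ∀ j, ∃ i, t i ∉ E2 j i)
    (G : Finset (∀ i, A i)) (rstar : ∀ i, A i) :
    ((∀ j, ∃ i, rstar i ∉ E1 j i) ∧ (∀ j, ∃ i, rstar i ∉ E2 j i) ∧
      ∀ t : ∀ i, A i, ((∀ j, ∃ i, t i ∉ E1 j i) ∧ (∀ j, ∃ i, t i ∉ E2 j i)) →
        ∑ r ∈ G, ∑ i, δ i (r i) (rstar i) ≤ ∑ r ∈ G, ∑ i, δ i (r i) (t i)) ↔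
    (((∀ j, ∃ i ∈ R1, rstar i ∉ E1 j i) ∧
      ∀ t : ∀ i, A i, (∀ j, ∃ i ∈ R1, t i ∉ E1 j i) →
        ∑ r ∈ G, ∑ i ∈ R1, δ i (r i) (rstar i) ≤ ∑ r ∈ G, ∑ i ∈ R1, δ i (r i) (t i)) ∧
     ((∀ j, ∃ i ∈ R2, rstar i ∉ E2 j i) ∧
      ∀ t : ∀ i, A i, (∀ j, ∃ i ∈ R2, t i ∉ E2 j i) →
        ∑ r ∈ G, ∑ i ∈ R2, δ i (r i) (rstar i) ≤ ∑ r ∈ G, ∑ i ∈ R2, δ i (r i) (t i))) := by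
  have hmem1 : ∀ (t : ∀ i, A i) j, (∃ i, t i ∉ E1 j i) ↔ ∃ i ∈ R1, t i ∉ E1 j i := by
    intro t j
    constructor
    · rintro ⟨i, hi⟩
      refine ⟨i, ?_, hi⟩
      by_contra h
      exact hi (by rw [hE1 j i h]; trivial)
    · rintro ⟨i, _, hi⟩; exact ⟨i, hi⟩
  have hmem2 : ∀ (t : ∀ i, A i) j, (∃ i, t i ∉ E2 j i) ↔ ∃ i ∈ R2, t i ∉ E2 j i := by
    intro t j
    constructor
    · rintro ⟨i, hi⟩
      refine ⟨i, ?_, hi⟩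
      by_contra h
      exact hi (by rw [hE2 j i h]; trivial)
    · rintro ⟨i, _, hi⟩; exact ⟨i, hi⟩
  have key : ∀ s : ∀ i, A i, ∑ r ∈ G, ∑ i, δ i (r i) (s i)
      = (∑ r ∈ G, ∑ i ∈ R1, δ i (r i) (s i)) + ∑ r ∈ G, ∑ i ∈ R2, δ i (r i) (s i) := by
    intro s
    rw [← Finset.sum_add_distrib]
    refine Finset.sum_congr rfl fun r _ => ?_
    rw [← Finset.sum_union hdisj, hunion]
  constructor
  · rintro ⟨h1, h2, hopt⟩
    refine ⟨⟨fun j => (hmem1 rstar j).1 (h1 j), ?_⟩, ⟨fun j => (hmem2 rstar j).1 (h2 j), ?_⟩⟩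
    · intro t ht
      set t' : ∀ i, A i := fun i => if i ∈ R1 then t i else rstar i with ht'def
      have hsat1' : ∀ j, ∃ i, t' i ∉ E1 j i := by
        intro j
        obtain ⟨i, hiR, hi⟩ := ht j
        exact ⟨i, by simpa [ht'def, hiR] using hi⟩
      have hsat2' : ∀ j, ∃ i, t' i ∉ E2 j i := by
        intro j
        obtain ⟨i, hiR, hi⟩ := (hmem2 rstar j).1 (h2 j)
        have : i ∉ R1 := fun h => (Finset.disjoint_left.1 hdisj h) hiR
        exact ⟨i, by simpa [ht'def, this] using hi⟩
      have h := hopt t' ⟨hsat1', hsat2'⟩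
      rw [key, key] at h
      have e1 : ∑ r ∈ G, ∑ i ∈ R1, δ i (r i) (t' i)
          = ∑ r ∈ G, ∑ i ∈ R1, δ i (r i) (t i) := by
        refine Finset.sum_congr rfl fun r _ => Finset.sum_congr rfl fun i hi => ?_
        simp [ht'def, hi]
      have e2 : ∑ r ∈ G, ∑ i ∈ R2, δ i (r i) (t' i)
          = ∑ r ∈ G, ∑ i ∈ R2, δ i (r i) (rstar i) := by
        refine Finset.sum_congr rfl fun r _ => Finset.sum_congr rfl fun i hi => ?_
        have : i ∉ R1 := fun h => (Finset.disjoint_left.1 hdisj h) hi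
        simp [ht'def, this]
      exact le_of_add_le_add_right (e1 ▸ e2 ▸ h)
    · intro t ht
      set t' : ∀ i, A i := fun i => if i ∈ R2 then t i else rstar i with ht'def
      have hsat2' : ∀ j, ∃ i, t' i ∉ E2 j i := by
        intro j
        obtain ⟨i, hiR, hi⟩ := ht j
        exact ⟨i, by simpa [ht'def, hiR] using hi⟩
      have hsat1' : ∀ j, ∃ i, t' i ∉ E1 j i := by
        intro j
        obtain ⟨i, hiR, hi⟩ := (hmem1 rstar j).1 (h1 j)
        have : i ∉ R2 := fun h => (Finset.disjoint_left.1 hdisj hiR) h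
        exact ⟨i, by simpa [ht'def, this] using hi⟩
      have h := hopt t' ⟨hsat1', hsat2'⟩
      rw [key, key] at h
      have e2 : ∑ r ∈ G, ∑ i ∈ R2, δ i (r i) (t' i)
          = ∑ r ∈ G, ∑ i ∈ R2, δ i (r i) (t i) := by
        refine Finset.sum_congr rfl fun r _ => Finset.sum_congr rfl fun i hi => ?_
        simp [ht'def, hi]
      have e1 : ∑ r ∈ G, ∑ i ∈ R1, δ i (r i) (t' i)
          = ∑ r ∈ G, ∑ i ∈ R1, δ i (r i) (rstar i) := by
        refine Finset.sum_congr rfl fun r _ => Finset.sum_congr rfl fun i hi => ?_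
        have : i ∉ R2 := fun h => (Finset.disjoint_left.1 hdisj hi) h
        simp [ht'def, this]
      exact le_of_add_le_add_left (e1 ▸ e2 ▸ h)
  · rintro ⟨⟨h1, hopt1⟩, ⟨h2, hopt2⟩⟩
    refine ⟨fun j => (hmem1 rstar j).2 (h1 j), fun j => (hmem2 rstar j).2 (h2 j), ?_⟩
    rintro t ⟨ht1, ht2⟩
    rw [key, key]
    exact Nat.add_le_add (hopt1 t fun j => (hmem1 t j).1 (ht1 j))
      (hopt2 t fun j => (hmem2 t j).1 (ht2 j))
end
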